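/- arXiv:2205.14798 — 4 statements merged into one kernel-verified Lean document; each statement's English description precedes it below -/
import Mathlib

section
/- No deterministic strategyproof facility location mechanism on [0,1] for any number n ≥ 2 of agents satisfies Strong Proportionality: there is no f : [0,1]^n → [0,1] that is strategyproof and such that whenever all agents are located at at most two distinct points, f outputs the average of the reported locations. -/
/-!
Put agent `i` at `a = (n - 1) / n` and everybody else at `1`. If `i` reports `0` instead, the
profile is two-valued with mean exactly `a`, so she is served at her true location; by
strategyproofness the truthful outcome must then be `a` as well. But the truthful profile is
two-valued too, and its mean `(a + n - 1) / n` differs from `a` as soon as `n ≠ 1`.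
-/

open Finset Function

lemma eq_of_strategyproof_of_update_eq {ι : Type*} [DecidableEq ι] {f : (ι → ℝ) → ℝ}
    {x : ι → ℝ} {i : ι} {x' : ℝ} (hSP : |x i - f x| ≤ |x i - f (update x i x')|)
    (hdev : f (update x i x') = x i) : f x = x i := by
  rw [hdev, sub_self, abs_zero] at hSP
  linarith [abs_nonpos_iff.mp hSP]

lemma sum_update_const {ι : Type*} [Fintype ι] [DecidableEq ι] (c t : ℝ) (i : ι) :
    ∑ j, update (fun _ => c) i t j = t + (Fintype.card ι - 1) * c := by
  rw [sum_update_of_mem (mem_univ i), sum_const, card_univ_sdiff, card_singleton, nsmul_eq_mul,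
    Nat.cast_pred (Fintype.card_pos_iff.mpr ⟨i⟩)]

lemma update_const_eq_or_eq {ι : Type*} [DecidableEq ι] (c t : ℝ) (i j : ι) :
    update (fun _ => c) i t j = t ∨ update (fun _ => c) i t j = c := by
  rw [update_apply]
  split_ifs <;> simp

lemma update_const_mem_Icc {ι : Type*} [DecidableEq ι] {c t a b : ℝ} (hc : c ∈ Set.Icc a b)
    (ht : t ∈ Set.Icc a b) (i j : ι) : update (fun _ => c) i t j ∈ Set.Icc a b := by
  rcases update_const_eq_or_eq c t i j with h | h <;> rw [h] <;> assumption

/-- For any n ≥ 2, no deterministic strategyproof mechanism on [0,1]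
satisfies Strong Proportionality (outputting the average whenever the profile
takes at most two distinct values). -/
theorem no_deterministic_SP_strong_proportional (n : ℕ) (hn : 2 ≤ n) :
    ¬ ∃ f : (Fin n → ℝ) → ℝ,
      (∀ x : Fin n → ℝ, (∀ i, x i ∈ Set.Icc (0:ℝ) 1) → f x ∈ Set.Icc (0:ℝ) 1) ∧
      (∀ (x : Fin n → ℝ) (i : Fin n) (x' : ℝ),
        (∀ j, x j ∈ Set.Icc (0:ℝ) 1) → x' ∈ Set.Icc (0:ℝ) 1 →
        |x i - f x| ≤ |x i - f (Function.update x i x')|) ∧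
      (∀ x : Fin n → ℝ, (∀ i, x i ∈ Set.Icc (0:ℝ) 1) →
        (∃ α β : ℝ, ∀ i, x i = α ∨ x i = β) →
        f x = (∑ i, x i) / n) := by
  rintro ⟨f, -, hSP, hprop⟩
  have hn' : (2 : ℝ) ≤ n := by exact_mod_cast hn
  let i : Fin n := ⟨0, by omega⟩
  have hone : (1 : ℝ) ∈ Set.Icc 0 1 := by norm_num
  have hmean : ∀ t ∈ Set.Icc (0 : ℝ) 1, f (update (fun _ => 1) i t) = (t + (n - 1)) / n :=
    fun t ht ↦ by
      rw [hprop _ (update_const_mem_Icc hone ht i) ⟨t, 1, update_const_eq_or_eq 1 t i⟩,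
        sum_update_const, Fintype.card_fin, mul_one]
  set a : ℝ := (n - 1) / n with ha
  have ha_mem : a ∈ Set.Icc 0 1 :=
    ⟨by rw [ha]; bound, by rw [ha, div_le_one (by linarith)]; linarith⟩
  have hdev : f (update (update (fun _ => 1) i a) i 0) = a := by
    rw [update_idem, hmean 0 (by norm_num), zero_add]
  have htruth : f (update (fun _ => 1) i a) = a := by
    simpa using eq_of_strategyproof_of_update_eq
      (hSP _ i 0 (update_const_mem_Icc hone ha_mem i) (by norm_num)) (by simpa using hdev)
  rw [hmean a ha_mem, ha] at htruth
  field_simp at htruth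
  nlinarith -- `htruth : (n - 1) * (1 + n) = n * (n - 1)` forces `n = 1`
end

section
/- Strong Proportionality is equivalent to averaging on two-valued profiles: a mechanism f : [0,1]^n → [0,1] satisfies Strong Proportionality (for every profile x ∈ {α,β}^n with 0 ≤ α < β ≤ 1 and every set S of agents at a common location, d(x_i,f(x)) ≤ ((n−|S|)/n)(β−α) for all i ∈ S) if and only if for every such two-valued profile x, f(x) equals the arithmetic mean (1/n)·Σ_i x_i. -/
/-!
On a two-valued profile the mean lies at distance `(n - k) / n * (β - α)` from each agent, where
`k` is the number of agents sharing that agent's location. So averaging gives Strong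
Proportionality, since a set of agents at a common location is contained in such a group.
Conversely, Strong Proportionality applied to the group of each agent `i` says that `f x` is at
least as close to every `x i` as the mean is; as some `x i` lie on either side of the mean, this
forces `f x` to be the mean.
-/

open Finset
open scoped BigOperators

namespace Fintype

variable {ι : Type*} [Fintype ι]

lemma sum_eq_of_forall_eq_or_eq {R : Type*} [CommRing R] [DecidableEq R] {x : ι → R} {c d : R}
    (h : ∀ j, x j = c ∨ x j = d) :
    ∑ j, x j = #{j | x j = c} * c + (card ι - #{j | x j = c}) * d := by
  calc ∑ j, x j = ∑ j, if x j = c then c else d :=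
        sum_congr _ _ fun j => by split_ifs with hc <;> [exact hc; exact (h j).resolve_left hc]
    _ = _ := by
      rw [sum_ite, sum_const, sum_const, nsmul_eq_mul, nsmul_eq_mul, ← card_univ,
        ← card_filter_add_card_filter_not (s := univ) (fun j => x j = c)]
      push_cast
      ring

variable {K : Type*} [Field K] [LinearOrder K] [IsStrictOrderedRing K]

lemma eq_expect_of_forall_abs_sub_le [Nonempty ι] {x : ι → K} {y : K}
    (h : ∀ i, |x i - y| ≤ |x i - 𝔼 j, x j|) : y = 𝔼 j, x j := by
  obtain ⟨i, -, hi⟩ := exists_le_of_expect_le univ_nonempty le_rfl (f := x)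
  obtain ⟨j, -, hj⟩ := exists_le_of_le_expect univ_nonempty le_rfl (f := x)
  have hyi := h i
  have hyj := h j
  rw [abs_of_nonpos (sub_nonpos.2 hi), abs_le] at hyi
  rw [abs_of_nonneg (sub_nonneg.2 hj), abs_le] at hyj
  linarith [hyi.1, hyj.2]

lemma sub_expect_of_forall_eq_or_eq [Nonempty ι] {x : ι → K} {c d : K}
    (h : ∀ j, x j = c ∨ x j = d) :
    c - 𝔼 j, x j = (card ι - #{j | x j = c}) / card ι * (c - d) := by
  have hN : (card ι : K) ≠ 0 := Nat.cast_ne_zero.2 card_ne_zero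
  rw [expect_eq_sum_div_card, sum_eq_of_forall_eq_or_eq h]
  field_simp
  ring

lemma abs_sub_expect_of_forall_eq_or_eq {x : ι → K} {α β : K} (hx : ∀ j, x j = α ∨ x j = β)
    (i : ι) : |x i - 𝔼 j, x j| = (card ι - #{j | x j = x i}) / card ι * |β - α| := by
  have : Nonempty ι := ⟨i⟩
  have hk : 0 ≤ (card ι - #{j | x j = x i} : K) / card ι :=
    div_nonneg (sub_nonneg.2 (mod_cast card_le_univ _)) (Nat.cast_nonneg _)
  rcases hx i with h | h <;> rw [h] at hk ⊢
  · rw [sub_expect_of_forall_eq_or_eq hx, abs_mul, abs_of_nonneg hk, abs_sub_comm]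
  · rw [sub_expect_of_forall_eq_or_eq fun j => (hx j).symm, abs_mul, abs_of_nonneg hk]

end Fintype

/-- Strong Proportionality is equivalent to averaging on two-valued
profiles. -/
theorem strong_proportionality_iff_average (n : ℕ) (hn : 2 ≤ n)
    (f : (Fin n → ℝ) → ℝ) :
    (∀ α β : ℝ, 0 ≤ α → α < β → β ≤ 1 →
      ∀ x : Fin n → ℝ, (∀ i, x i = α ∨ x i = β) →
      ∀ S : Finset (Fin n), (∀ i ∈ S, ∀ j ∈ S, x i = x j) →
      ∀ i ∈ S, |x i - f x| ≤ (((n : ℝ) - S.card) / n) * (β - α))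
    ↔
    (∀ α β : ℝ, 0 ≤ α → α < β → β ≤ 1 →
      ∀ x : Fin n → ℝ, (∀ i, x i = α ∨ x i = β) →
      f x = (∑ i, x i) / n) := by
  have hmean (x : Fin n → ℝ) : (∑ i, x i) / n = 𝔼 i, x i := by
    rw [Fintype.expect_eq_sum_div_card, Fintype.card_fin]
  have hdist {α β : ℝ} (hαβ : α < β) {x : Fin n → ℝ} (hx : ∀ i, x i = α ∨ x i = β) (i : Fin n) :
      |x i - 𝔼 j, x j| = (n - #{j | x j = x i}) / n * (β - α) := by
    rw [Fintype.abs_sub_expect_of_forall_eq_or_eq hx, Fintype.card_fin, abs_of_pos (sub_pos.2 hαβ)]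
  constructor
  · intro H α β hα hαβ hβ x hx
    have : Nonempty (Fin n) := ⟨⟨0, by omega⟩⟩
    rw [hmean]
    refine Fintype.eq_expect_of_forall_abs_sub_le fun i => ?_
    rw [hdist hαβ hx]
    exact H α β hα hαβ hβ x hx {j | x j = x i} (by simp +contextual) i (by simp)
  · intro H α β hα hαβ hβ x hx S hS i hi
    rw [H α β hα hαβ hβ x hx, hmean, hdist hαβ hx]
    gcongr
    exact fun j hj => by simp [hS j hj i hi]
end

section
/- The Random Rank mechanism satisfies Strong Proportionality in expectation: for any profile x ∈ {α,β}^n with 0 ≤ α < β ≤ 1 and any set S of agents at a common location, the expected distance from each agent in S to the facility, i.e., (1/n)·Σ_{k=1}^n |x_i − rank^k(x)|, is at most ((n−|S|)/n)(β−α) for all i ∈ S. -/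
/-!
As `k` runs over `1, …, n`, `rankK n k x` runs over the coordinates of `x` in sorted order, so
the expected cost of agent `i` is its average distance `(1/n) ∑ⱼ |x i - x j|` to all agents.
Agents of `S` sit at distance `0` from `i`, and every other agent at distance at most `β - α`.
-/

/-- `rankK n k x` is the k-th largest of the coordinates of `x`. -/
noncomputable def rankK (n k : ℕ) (x : Fin n → ℝ) : ℝ :=
  ((List.ofFn x).insertionSort (· ≥ ·)).getD (k - 1) 0

open Finset

theorem sum_Icc_one_eq_sum_fin {M : Type*} [AddCommMonoid M] (n : ℕ) (g : ℕ → M) :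
    ∑ k ∈ Icc 1 n, g k = ∑ i : Fin n, g (i + 1) := by
  rw [Fin.sum_univ_eq_sum_range (fun i => g (i + 1)), range_eq_Ico, sum_Ico_add' g,
    zero_add, Ico_add_one_right_eq_Icc]

theorem sum_Icc_rankK {M : Type*} [AddCommMonoid M] (n : ℕ) (x : Fin n → ℝ) (f : ℝ → M) :
    ∑ k ∈ Icc 1 n, f (rankK n k x) = ∑ j, f (x j) := by
  set l := (List.ofFn x).insertionSort (· ≥ ·)
  have hperm : l.Perm (List.ofFn x) := List.perm_insertionSort _ _
  have hlen : l.length = n := by simp [l]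
  calc ∑ k ∈ Icc 1 n, f (rankK n k x)
      = ∑ i : Fin l.length, f l[i.1] := by
        rw [sum_Icc_one_eq_sum_fin]
        exact Fintype.sum_equiv (finCongr hlen.symm) _ _ fun i => by
          simp [rankK, l]
    _ = ∑ j, f (x j) := by
        rw [Fin.sum_univ_fun_getElem, (hperm.map f).sum_eq, List.map_ofFn, List.sum_ofFn]
        rfl

theorem sum_le_card_compl_mul {ι R : Type*} [Fintype ι] [DecidableEq ι] [Ring R]
    [PartialOrder R] [IsOrderedRing R] (f : ι → R) (S : Finset ι) (c : R) (hS : ∀ j ∈ S, f j = 0) (hc : ∀ j, f j ≤ c) :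
    ∑ j, f j ≤ (Fintype.card ι - #S) * c := by
  calc ∑ j, f j = ∑ j ∈ Sᶜ, f j := (sum_subset (subset_univ _) fun j _ hj =>
        hS j (by simpa using hj)).symm
    _ ≤ #Sᶜ • c := sum_le_card_nsmul _ _ _ fun j _ => hc j
    _ = (Fintype.card ι - #S) * c := by
        rw [card_compl, nsmul_eq_mul, Nat.cast_sub (card_le_univ S)]

theorem randomRank_strong_proportional_in_expectation_general (n : ℕ)
    (α β : ℝ) (hαβ : α < β)
    (x : Fin n → ℝ) (hx : ∀ i, x i = α ∨ x i = β)
    (S : Finset (Fin n)) (hS : ∀ i ∈ S, ∀ j ∈ S, x i = x j) :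
    ∀ i ∈ S, (1 / (n : ℝ)) * ∑ k ∈ Finset.Icc 1 n, |x i - rankK n k x| ≤
      (((n : ℝ) - S.card) / n) * (β - α) := by
  intro i hi
  have hIcc : ∀ j, x j ∈ Set.Icc α β := fun j => by
    rcases hx j with h | h <;> simp [h, hαβ.le]
  have hbound : ∑ j, |x i - x j| ≤ (n - #S) * (β - α) := by
    simpa using sum_le_card_compl_mul (fun j => |x i - x j|) S (β - α)
      (fun j hj => by simp [hS i hi j hj]) (fun j => Real.dist_le_of_mem_Icc (hIcc i) (hIcc j))
  rw [sum_Icc_rankK n x (fun v => |x i - v|)]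
  calc (1 / (n : ℝ)) * ∑ j, |x i - x j| ≤ (1 / n) * ((n - #S) * (β - α)) := by gcongr
    _ = ((n - #S) / n) * (β - α) := by ring

/-- Random Rank satisfies Strong Proportionality in expectation. -/
theorem randomRank_strong_proportional_in_expectation (n : ℕ) (hn : 1 ≤ n)
    (α β : ℝ) (hα : 0 ≤ α) (hαβ : α < β) (hβ : β ≤ 1)
    (x : Fin n → ℝ) (hx : ∀ i, x i = α ∨ x i = β)
    (S : Finset (Fin n)) (hS : ∀ i ∈ S, ∀ j ∈ S, x i = x j) :
    ∀ i ∈ S, (1 / (n : ℝ)) * ∑ k ∈ Finset.Icc 1 n, |x i - rankK n k x| ≤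
      (((n : ℝ) - S.card) / n) * (β - α) :=
  randomRank_strong_proportional_in_expectation_general n α β hαβ x hx S hS
end

section
/- Suppose a family of nonnegative real random variables Y_{(1)} ≤ … ≤ Y_{(n−1)} taking values in [0,1] arises as order statistics of phantoms of a mechanism satisfying Strong Proportionality in expectation, so that for each i ∈ {1,…,n−1} and all 0 ≤ α < β ≤ 1: Pr[Y_{(i)} ≤ α] ≤ (n−i)/n and Pr[Y_{(i)} ≥ β] ≤ i/n. Then Pr[Y_{(i)} = 1] = i/n and Pr[Y_{(i)} = 0] = (n−i)/n; in particular Y_{(i)} ∈ {0,1} almost surely. -/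
/-!
Continuity from below turns the bounds `Pr[Y ≤ α] ≤ (n-i)/n` for all `α < 1` into
`Pr[Y < 1] ≤ (n-i)/n`, and dually the bounds `Pr[Y ≥ β] ≤ i/n` for `β > 0` into
`Pr[Y > 0] ≤ i/n`. Together with `Pr[Y ≥ 1] ≤ i/n` and `Pr[Y ≤ 0] ≤ (n-i)/n` this bounds the
two halves of two partitions of `Ω` by masses adding up to at most `1`, so all four bounds are
equalities. Since `Y ∈ [0,1]`, the events `Y ≥ 1` and `Y ≤ 0` are `Y = 1` and `Y = 0`.
-/

open MeasureTheory ENNReal Set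

theorem ENNReal.eq_and_eq_of_le_of_le_of_add_le {x y a b : ℝ≥0∞} (hx : x ≤ a) (hy : y ≤ b)
    (hab : a + b ≤ x + y) (hab_ne_top : a + b ≠ ∞) : x = a ∧ y = b := by
  have ha : a ≠ ∞ := (ENNReal.add_ne_top.mp hab_ne_top).1
  have hb : b ≠ ∞ := (ENNReal.add_ne_top.mp hab_ne_top).2
  refine ⟨le_antisymm hx (ENNReal.le_of_add_le_add_right hb ?_),
    le_antisymm hy (ENNReal.le_of_add_le_add_left ha ?_)⟩
  · exact hab.trans (by gcongr)
  · exact hab.trans (by gcongr)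

section ContinuityFromBelow

variable {Ω α : Type*} [MeasurableSpace Ω] [LinearOrder α] [TopologicalSpace α] [OrderTopology α]
  [DenselyOrdered α] [FirstCountableTopology α]

theorem measure_lt_le_of_forall_lt [NoMinOrder α] (μ : Measure Ω) (Y : Ω → α) {c : α}
    {a : ℝ≥0∞} (h : ∀ x < c, μ {ω | Y ω ≤ x} ≤ a) : μ {ω | Y ω < c} ≤ a := by
  obtain ⟨u, hu_mono, hu_lt, hu_lim⟩ := exists_seq_strictMono_tendsto c
  have hunion : {ω | Y ω < c} = ⋃ k, {ω | Y ω ≤ u k} := by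
    ext ω
    simp only [mem_iUnion, mem_ofPred_eq]
    exact ⟨fun h ↦ (hu_lim.eventually (lt_mem_nhds h)).exists.imp fun k ↦ le_of_lt,
      fun ⟨k, hk⟩ ↦ hk.trans_lt (hu_lt k)⟩
  have hmono : Monotone fun k ↦ {ω | Y ω ≤ u k} :=
    fun j k hjk ω hω ↦ le_trans hω (hu_mono.monotone hjk)
  rw [hunion, hmono.measure_iUnion]
  exact iSup_le fun k ↦ h (u k) (hu_lt k)

theorem measure_gt_le_of_forall_gt [NoMaxOrder α] (μ : Measure Ω) (Y : Ω → α) {c : α}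
    {a : ℝ≥0∞} (h : ∀ x > c, μ {ω | x ≤ Y ω} ≤ a) : μ {ω | c < Y ω} ≤ a :=
  measure_lt_le_of_forall_lt (α := αᵒᵈ) μ (OrderDual.toDual ∘ Y) h

end ContinuityFromBelow

theorem measure_eq_and_measure_compl_eq_of_add_le_one {Ω : Type*} [MeasurableSpace Ω]
    {μ : Measure Ω} [IsProbabilityMeasure μ] {s : Set Ω} {a b : ℝ≥0∞} (hab : a + b ≤ 1)
    (hs : μ s ≤ a) (hsc : μ sᶜ ≤ b) : μ s = a ∧ μ sᶜ = b ∧ a + b = 1 := by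
  have hcover : 1 ≤ μ s + μ sᶜ := measure_univ (μ := μ) ▸ measure_univ_le_add_compl s
  obtain ⟨hs_eq, hsc_eq⟩ := ENNReal.eq_and_eq_of_le_of_le_of_add_le hs hsc (hab.trans hcover)
    (ne_top_of_le_ne_top one_ne_top hab)
  exact ⟨hs_eq, hsc_eq, le_antisymm hab (hs_eq ▸ hsc_eq ▸ hcover)⟩

theorem phantom_order_statistic_two_point_general {Ω : Type*} [MeasurableSpace Ω]
    (μ : Measure Ω) [IsProbabilityMeasure μ] (n i : ℕ)
    (hi2 : i ≤ n - 1)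
    (Y : Ω → ℝ) (hY : Measurable Y) (hrange : ∀ ω, Y ω ∈ Set.Icc (0:ℝ) 1)
    (htail : ∀ α β : ℝ, 0 ≤ α → α < β → β ≤ 1 →
      μ {ω | Y ω ≤ α} ≤ ((n - i : ℕ) : ℝ≥0∞) / n ∧
      μ {ω | β ≤ Y ω} ≤ (i : ℝ≥0∞) / n) :
    μ {ω | Y ω = 1} = (i : ℝ≥0∞) / n ∧
    μ {ω | Y ω = 0} = ((n - i : ℕ) : ℝ≥0∞) / n ∧
    μ {ω | Y ω = 0 ∨ Y ω = 1} = 1 := by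
  have hab : ((n - i : ℕ) : ℝ≥0∞) / n + (i : ℝ≥0∞) / n ≤ 1 := by
    rw [ENNReal.div_add_div_same, ← Nat.cast_add, Nat.sub_add_cancel (hi2.trans (n.sub_le 1))]
    exact ENNReal.div_self_le_one
  have hlt_one : μ {ω | Y ω < 1} ≤ ((n - i : ℕ) : ℝ≥0∞) / n :=
    measure_lt_le_of_forall_lt μ Y fun x hx ↦
      (measure_mono fun ω (hω : Y ω ≤ x) ↦ hω.trans (le_max_left x 0)).trans
        (htail (max x 0) 1 (le_max_right x 0) (max_lt hx one_pos) le_rfl).1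
  have hgt_zero : μ {ω | 0 < Y ω} ≤ (i : ℝ≥0∞) / n :=
    measure_gt_le_of_forall_gt μ Y fun x hx ↦
      (measure_mono fun ω (hω : x ≤ Y ω) ↦ (min_le_left x 1).trans hω).trans
        (htail 0 (min x 1) le_rfl (lt_min hx one_pos) (min_le_right x 1)).2
  obtain ⟨-, hone, hab_eq⟩ := measure_eq_and_measure_compl_eq_of_add_le_one hab hlt_one
    (by simpa only [compl_ofPred, not_lt] using (htail 0 1 le_rfl one_pos le_rfl).2)
  obtain ⟨hzero, -⟩ := measure_eq_and_measure_compl_eq_of_add_le_one hab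
    (htail 0 1 le_rfl one_pos le_rfl).1 (by simpa only [compl_ofPred, not_le] using hgt_zero)
  have heq_one : {ω | Y ω = 1} = {ω | Y ω < 1}ᶜ :=
    ext fun ω ↦ ⟨fun h ↦ h.ge.not_gt, fun h ↦ le_antisymm (hrange ω).2 (not_lt.mp h)⟩
  have heq_zero : {ω | Y ω = 0} = {ω | Y ω ≤ 0} :=
    ext fun ω ↦ ⟨fun h ↦ h.le, fun h ↦ le_antisymm h (hrange ω).1⟩
  have hdisj : Disjoint {ω | Y ω = 0} {ω | Y ω = 1} :=
    disjoint_left.mpr fun ω h0 h1 ↦ zero_ne_one (h0.symm.trans h1)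
  refine ⟨heq_one ▸ hone, heq_zero ▸ hzero, ?_⟩
  rw [ofPred_or, measure_union hdisj (hY (measurableSet_singleton 1)), heq_one, heq_zero, hone,
    hzero, hab_eq]

/-- If a [0,1]-valued random variable Y (the i-th order statistic of
the phantoms of a mechanism satisfying Strong Proportionality in expectation)
satisfies the tail bounds Pr[Y ≤ α] ≤ (n−i)/n and Pr[Y ≥ β] ≤ i/n for all
0 ≤ α < β ≤ 1, then Pr[Y = 1] = i/n and Pr[Y = 0] = (n−i)/n; in particular
Y ∈ {0,1} almost surely. -/
theorem phantom_order_statistic_two_point {Ω : Type*} [MeasurableSpace Ω]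
    (μ : Measure Ω) [IsProbabilityMeasure μ] (n i : ℕ)
    (hi1 : 1 ≤ i) (hi2 : i ≤ n - 1)
    (Y : Ω → ℝ) (hY : Measurable Y) (hrange : ∀ ω, Y ω ∈ Set.Icc (0:ℝ) 1)
    (htail : ∀ α β : ℝ, 0 ≤ α → α < β → β ≤ 1 →
      μ {ω | Y ω ≤ α} ≤ ((n - i : ℕ) : ℝ≥0∞) / n ∧
      μ {ω | β ≤ Y ω} ≤ (i : ℝ≥0∞) / n) :
    μ {ω | Y ω = 1} = (i : ℝ≥0∞) / n ∧
    μ {ω | Y ω = 0} = ((n - i : ℕ) : ℝ≥0∞) / n ∧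
    μ {ω | Y ω = 0 ∨ Y ω = 1} = 1 :=
  phantom_order_statistic_two_point_general μ n i hi2 Y hY hrange htail
end
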